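/- arXiv:2605.08946 — 2 statements merged into one kernel-verified Lean document; each statement's English description precedes it below -/
import Mathlib

section
/- Let $\mathcal{C} \subset \mathbb{R}^m$ be a nonempty compact convex polytope, $\tau > 0$, $I \in \mathbb{R}^m$. If $c^\star \in \mathcal{C}$ is Pareto optimal for maximization, then there exists $\omega \in \mathbb{R}^m_{++}$ such that $c^\star$ maximizes $u(c,\omega) = -\tau \log \sum_{i=1}^m \exp(\omega_i(I_i - c_i)/\tau)$ over $\mathcal{C}$. -/
open Matrix Finset

/-- Dot product distributes over finite sums in the left argument. -/
lemma sum_dp {m : ℕ} {ι : Type*} (s : Finset ι) (f : ι → (Fin m → ℝ)) (x : Fin m → ℝ) :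
    (∑ j ∈ s, f j) ⬝ᵥ x = ∑ j ∈ s, f j ⬝ᵥ x := by
  simp only [dotProduct, Finset.sum_apply, Finset.sum_mul]
  rw [Finset.sum_comm]

/-- Elementary Farkas lemma: if every `d` in the dual cone of the `v i` has
`0 ≤ w ⬝ᵥ d`, then `w` is a nonnegative combination of the `v i`. -/
lemma farkas_cone {m : ℕ} : ∀ (k : ℕ) (v : Fin k → (Fin m → ℝ)) (w : Fin m → ℝ),
    (∀ d : Fin m → ℝ, (∀ i, 0 ≤ v i ⬝ᵥ d) → 0 ≤ w ⬝ᵥ d) →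
    ∃ t : Fin k → ℝ, (∀ i, 0 ≤ t i) ∧ w = ∑ i, t i • v i := by
  intro k
  induction k with
  | zero =>
    intro v w h
    refine ⟨0, fun i => le_refl _, ?_⟩
    have h0 := h (-w) (fun i => i.elim0)
    rw [dotProduct_neg] at h0
    have hsq : w ⬝ᵥ w = 0 := le_antisymm (by linarith)
      (Finset.sum_nonneg fun i _ => mul_self_nonneg _)
    have hw0 : w = 0 := dotProduct_self_eq_zero.mp hsq
    simp [hw0]
  | succ k ih =>
    intro v w h
    by_cases hc : ∀ d : Fin m → ℝ, (∀ i : Fin k, 0 ≤ v i.succ ⬝ᵥ d) → 0 ≤ w ⬝ᵥ d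
    · obtain ⟨t, ht, hw⟩ := ih (fun i => v i.succ) w hc
      refine ⟨Fin.cases 0 t, fun i => ?_, ?_⟩
      · induction i using Fin.cases <;> simp [ht _]
      · rw [Fin.sum_univ_succ]
        simpa using hw
    · push_neg at hc
      obtain ⟨d0, hd0, hwd0⟩ := hc
      have hv0 : v 0 ⬝ᵥ d0 < 0 := by
        by_contra hge
        push_neg at hge
        exact absurd (h d0 (fun i => Fin.cases hge hd0 i)) (not_le.mpr hwd0)
      set β := v 0 ⬝ᵥ d0 with hβ
      have hβne : β ≠ 0 := ne_of_lt hv0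
      set proj : (Fin m → ℝ) → (Fin m → ℝ) := fun u => u - ((u ⬝ᵥ d0) / β) • v 0 with hproj
      have key : ∀ u d : Fin m → ℝ, u ⬝ᵥ (d - ((v 0 ⬝ᵥ d) / β) • d0) = proj u ⬝ᵥ d := by
        intro u d
        simp only [hproj, dotProduct_sub, sub_dotProduct,
          dotProduct_smul, smul_dotProduct, smul_eq_mul]
        ring
      have hyp : ∀ d : Fin m → ℝ, (∀ i : Fin k, 0 ≤ proj (v i.succ) ⬝ᵥ d) →
          0 ≤ proj w ⬝ᵥ d := by
        intro d hd
        rw [← key]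
        refine h _ (fun i => ?_)
        refine Fin.cases ?_ (fun i => ?_) i
        · rw [key]
          have hpv0 : proj (v 0) = 0 := by
            simp only [hproj, ← hβ, div_self hβne, one_smul, sub_self]
          rw [hpv0, zero_dotProduct]
        · rw [key]; exact hd i
      obtain ⟨t, ht, hw'⟩ := ih (fun i => proj (v i.succ)) (proj w) hyp
      set α := (w ⬝ᵥ d0) / β with hα
      have hαpos : 0 < α := div_pos_of_neg_of_neg hwd0 hv0
      set γ : Fin k → ℝ := fun i => (v i.succ ⬝ᵥ d0) / β with hγ
      have hγnp : ∀ i, γ i ≤ 0 := fun i => div_nonpos_of_nonneg_of_nonpos (hd0 i) hv0.le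
      refine ⟨Fin.cases (α + ∑ i, t i * (-γ i)) t, fun i => ?_, ?_⟩
      · refine Fin.cases ?_ (fun i => by simp [ht i]) i
        simp only [Fin.cases_zero]
        have : 0 ≤ ∑ i, t i * (-γ i) :=
          Finset.sum_nonneg fun i _ => mul_nonneg (ht i) (by linarith [hγnp i])
        linarith
      · rw [Fin.sum_univ_succ]
        simp only [Fin.cases_zero, Fin.cases_succ]
        have hw2 : w = (∑ i, t i • proj (v i.succ)) + α • v 0 := by
          rw [← hw']
          simp only [hproj, ← hα, sub_add_cancel]
        rw [hw2]
        have hexp : ∀ i : Fin k, t i • proj (v i.succ) = t i • v i.succ - (t i * γ i) • v 0 := by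
          intro i
          simp only [hproj, ← hγ, smul_sub, smul_smul]
          rfl
        rw [Finset.sum_congr rfl (fun i _ => hexp i), Finset.sum_sub_distrib, ← Finset.sum_smul]
        have : ∑ i, t i * (-γ i) = -∑ i, t i * γ i := by
          rw [← Finset.sum_neg_distrib]
          exact Finset.sum_congr rfl fun i _ => by ring
        rw [this, add_smul, neg_smul]
        abel

theorem pos_support_functional {m n : ℕ} (A : Matrix (Fin n) (Fin m) ℝ) (b : Fin n → ℝ)
    (C : Set (Fin m → ℝ)) (hCdef : C = {c | ∀ j, ∑ i, A j i * c i ≤ b j})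
    (cstar : Fin m → ℝ) (hmem : cstar ∈ C)
    (hpareto : ¬ ∃ c ∈ C, (∀ i, cstar i ≤ c i) ∧ c ≠ cstar) :
    ∃ lam : Fin m → ℝ, (∀ i, 0 < lam i) ∧ ∀ c ∈ C, lam ⬝ᵥ c ≤ lam ⬝ᵥ cstar := by
  classical
  have hmemC : ∀ c, c ∈ C ↔ ∀ j, A j ⬝ᵥ c ≤ b j := by
    intro c; rw [hCdef]; exact Iff.rfl
  set V : Fin (n + m) → (Fin m → ℝ) :=
    Fin.addCases (fun j => if A j ⬝ᵥ cstar = b j then -(A j) else 0)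
      (fun i => Pi.single i 1) with hV
  have hfark : ∃ t : Fin (n + m) → ℝ, (∀ i, 0 ≤ t i) ∧
      (fun _ => (-1 : ℝ)) = ∑ i, t i • V i := by
    apply farkas_cone
    intro d hd
    have hdnn : ∀ i, 0 ≤ d i := by
      intro i
      have := hd (Fin.natAdd n i)
      simp only [hV, Fin.addCases_right, single_dotProduct, one_mul] at this
      exact this
    have hdA : ∀ j, A j ⬝ᵥ cstar = b j → A j ⬝ᵥ d ≤ 0 := by
      intro j hj
      have := hd (Fin.castAdd m j)
      simp only [hV, Fin.addCases_left, if_pos hj, neg_dotProduct] at this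
      linarith
    have hd0 : d = 0 := by
      by_contra hne
      have hi0 : ∃ i0, 0 < d i0 := by
        by_contra hno
        push_neg at hno
        exact hne (funext fun i => le_antisymm (hno i) (hdnn i))
      obtain ⟨i0, hi0⟩ := hi0
      set S : Finset ℝ := insert (1 : ℝ) (Finset.univ.image fun j =>
        if 0 < A j ⬝ᵥ d then (b j - A j ⬝ᵥ cstar) / (A j ⬝ᵥ d) else 1) with hS
      have hSne : S.Nonempty := Finset.insert_nonempty _ _
      set ε := S.min' hSne with hε
      have hεpos : 0 < ε := by
        rw [hε, Finset.lt_min'_iff]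
        intro y hy
        rw [hS, Finset.mem_insert] at hy
        rcases hy with rfl | hy
        · exact one_pos
        · obtain ⟨j, -, rfl⟩ := Finset.mem_image.mp hy
          by_cases hj : 0 < A j ⬝ᵥ d
          · rw [if_pos hj]
            apply div_pos _ hj
            have h1 : A j ⬝ᵥ cstar ≤ b j := (hmemC cstar).mp hmem j
            have h2 : A j ⬝ᵥ cstar ≠ b j := fun heq => absurd (hdA j heq) (not_le.mpr hj)
            cases lt_or_eq_of_le h1 with
            | inl h => linarith
            | inr h => exact absurd h h2
          · rw [if_neg hj]; exact one_pos
      have hεle : ∀ j, 0 < A j ⬝ᵥ d → ε * (A j ⬝ᵥ d) ≤ b j - A j ⬝ᵥ cstar := by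
        intro j hj
        have hmemS : (b j - A j ⬝ᵥ cstar) / (A j ⬝ᵥ d) ∈ S := by
          rw [hS]
          refine Finset.mem_insert_of_mem (Finset.mem_image.mpr ⟨j, Finset.mem_univ j, ?_⟩)
          rw [if_pos hj]
        have hmin : ε ≤ (b j - A j ⬝ᵥ cstar) / (A j ⬝ᵥ d) := Finset.min'_le S _ hmemS
        calc ε * (A j ⬝ᵥ d) ≤ ((b j - A j ⬝ᵥ cstar) / (A j ⬝ᵥ d)) * (A j ⬝ᵥ d) :=
              mul_le_mul_of_nonneg_right hmin hj.le
          _ = b j - A j ⬝ᵥ cstar := div_mul_cancel₀ _ (ne_of_gt hj)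
      have hcC : cstar + ε • d ∈ C := by
        rw [hmemC]
        intro j
        rw [dotProduct_add, dotProduct_smul, smul_eq_mul]
        have h1 : A j ⬝ᵥ cstar ≤ b j := (hmemC cstar).mp hmem j
        rcases le_or_gt (A j ⬝ᵥ d) 0 with hle | hlt
        · nlinarith
        · have := hεle j hlt; linarith
      apply hpareto
      refine ⟨cstar + ε • d, hcC, fun i => ?_, ?_⟩
      · have : 0 ≤ ε * d i := mul_nonneg hεpos.le (hdnn i)
        simp only [Pi.add_apply, Pi.smul_apply, smul_eq_mul]
        linarith
      · intro heq
        have := congrFun heq i0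
        simp only [Pi.add_apply, Pi.smul_apply, smul_eq_mul] at this
        nlinarith
    subst hd0
    simp
  obtain ⟨t, ht, hsum⟩ := hfark
  rw [Fin.sum_univ_add] at hsum
  set y : Fin n → ℝ := fun j => t (Fin.castAdd m j) with hy
  set μ : Fin m → ℝ := fun i => t (Fin.natAdd n i) with hμ
  set lam : Fin m → ℝ := ∑ j : Fin n, y j • (if A j ⬝ᵥ cstar = b j then A j else 0) with hlam
  have hA : ∀ i, (∑ x : Fin n, t (Fin.castAdd m x) • V (Fin.castAdd m x)) i = -(lam i) := by
    intro i
    simp only [hlam, Finset.sum_apply, Pi.smul_apply, smul_eq_mul, hV, Fin.addCases_left]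
    rw [← Finset.sum_neg_distrib]
    apply Finset.sum_congr rfl
    intro j _
    by_cases hj : A j ⬝ᵥ cstar = b j
    · simp [hj, hy]
    · simp [hj, hy]
  have hB : ∀ i, (∑ x : Fin m, t (Fin.natAdd n x) • V (Fin.natAdd n x)) i = μ i := by
    intro i
    simp only [Finset.sum_apply, Pi.smul_apply, smul_eq_mul, hV, Fin.addCases_right]
    rw [Finset.sum_eq_single i]
    · simp [hμ]
    · intro b' _ hb'; simp [Pi.single_apply, hb']
    · intro hh; exact absurd (Finset.mem_univ i) hh
  have hpt : ∀ i, -1 = -(lam i) + μ i := by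
    intro i
    have h := congrFun hsum i
    simp only [Pi.add_apply] at h
    rw [hA i, hB i] at h
    exact h
  have hlampos : ∀ i, 0 < lam i := by
    intro i
    have h1 := hpt i
    have h2 : 0 ≤ μ i := ht _
    linarith
  refine ⟨lam, hlampos, ?_⟩
  intro c hc
  have hsub : lam ⬝ᵥ (c - cstar) ≤ 0 := by
    rw [hlam, sum_dp]
    apply Finset.sum_nonpos
    intro j _
    rw [smul_dotProduct, smul_eq_mul]
    by_cases hj : A j ⬝ᵥ cstar = b j
    · rw [if_pos hj, dotProduct_sub]
      have := (hmemC c).mp hc j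
      have hynn : 0 ≤ y j := ht _
      nlinarith
    · rw [if_neg hj, zero_dotProduct]
      simp
  rw [dotProduct_sub] at hsub
  linarith

/-- The smooth Tchebycheff utility. -/
noncomputable def stchU (m : ℕ) (τ : ℝ) (I ω c : Fin m → ℝ) : ℝ :=
  -τ * Real.log (∑ i, Real.exp (ω i * (I i - c i) / τ))

/-- Every Pareto-optimal point of a nonempty compact convex polytope is the
maximizer of the smooth Tchebycheff utility for some strictly positive preference ω. -/
theorem stmt_6 (m n : ℕ) (A : Matrix (Fin n) (Fin m) ℝ) (b : Fin n → ℝ)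
    (C : Set (Fin m → ℝ)) (hCdef : C = {c | ∀ j, ∑ i, A j i * c i ≤ b j})
    (hcomp : IsCompact C) (τ : ℝ) (hτ : 0 < τ) (I : Fin m → ℝ)
    (cstar : Fin m → ℝ) (hmem : cstar ∈ C)
    (hpareto : ¬ ∃ c ∈ C, (∀ i, cstar i ≤ c i) ∧ c ≠ cstar) :
    ∃ ω : Fin m → ℝ, (∀ i, 0 < ω i) ∧ ∀ c ∈ C, stchU m τ I ω c ≤ stchU m τ I ω cstar := by
  classical
  by_cases hm : m = 0
  · subst hm
    exact ⟨fun _ => 1, fun i => i.elim0, fun c _ => by simp [stchU]⟩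
  have hm' : 0 < m := Nat.pos_of_ne_zero hm
  haveI : Nonempty (Fin m) := ⟨⟨0, hm'⟩⟩
  obtain ⟨lam, hlampos, hlammax⟩ := pos_support_functional A b C hCdef cstar hmem hpareto
  set a : Fin m → ℝ := fun i => (I i - cstar i) / τ with ha
  set S : Finset ℝ := insert (1 : ℝ) (Finset.univ.image fun i => Real.exp (a i) / lam i)
    with hS
  have hSne : S.Nonempty := Finset.insert_nonempty _ _
  set s := S.min' hSne with hs
  have hspos : 0 < s := by
    rw [hs, Finset.lt_min'_iff]
    intro y hy
    rw [hS, Finset.mem_insert] at hy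
    rcases hy with rfl | hy
    · exact one_pos
    · obtain ⟨i, -, rfl⟩ := Finset.mem_image.mp hy
      exact div_pos (Real.exp_pos _) (hlampos i)
  have hsle : ∀ i, s ≤ Real.exp (a i) / lam i := by
    intro i
    apply Finset.min'_le
    rw [hS]
    exact Finset.mem_insert_of_mem (Finset.mem_image_of_mem _ (Finset.mem_univ i))
  have hex : ∀ i, ∃ w : ℝ, 0 < w ∧ w * Real.exp (a i * w) = s * lam i := by
    intro i
    have hcont : ContinuousOn (fun w : ℝ => w * Real.exp (a i * w)) (Set.Icc 0 1) := by
      fun_prop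
    have hmem' : s * lam i ∈ Set.Icc ((fun w : ℝ => w * Real.exp (a i * w)) 0)
        ((fun w : ℝ => w * Real.exp (a i * w)) 1) := by
      constructor
      · simp only [zero_mul, Real.exp_zero, mul_zero, zero_mul]
        exact mul_nonneg hspos.le (hlampos i).le
      · simp only [one_mul, mul_one]
        exact (le_div_iff₀ (hlampos i)).mp (hsle i)
    obtain ⟨w, hwI, hweq⟩ := intermediate_value_Icc zero_le_one hcont hmem'
    refine ⟨w, ?_, hweq⟩
    rcases lt_or_eq_of_le hwI.1 with h | h
    · exact h
    · exfalso
      rw [← h] at hweq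
      simp only [zero_mul] at hweq
      have := mul_pos hspos (hlampos i)
      linarith
  choose ω hωpos hωeq using hex
  refine ⟨ω, hωpos, ?_⟩
  intro c hc
  set G : (Fin m → ℝ) → ℝ := fun x => ∑ i, Real.exp (ω i * (I i - x i) / τ) with hG
  have hGpos : 0 < G cstar :=
    Finset.sum_pos (fun i _ => Real.exp_pos _) Finset.univ_nonempty
  have hterm : ∀ i, Real.exp (ω i * (I i - cstar i) / τ) + s * lam i * ((cstar i - c i) / τ)
      ≤ Real.exp (ω i * (I i - c i) / τ) := by
    intro i
    have h1 := Real.add_one_le_exp (ω i * (cstar i - c i) / τ)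
    have h2 : Real.exp (ω i * (I i - c i) / τ) =
        Real.exp (ω i * (I i - cstar i) / τ) * Real.exp (ω i * (cstar i - c i) / τ) := by
      rw [← Real.exp_add]
      congr 1
      field_simp
      ring
    have hE := (Real.exp_pos (ω i * (I i - cstar i) / τ)).le
    have h3 : Real.exp (ω i * (I i - cstar i) / τ) * (ω i * (cstar i - c i) / τ + 1)
        ≤ Real.exp (ω i * (I i - c i) / τ) := by
      rw [h2]
      exact mul_le_mul_of_nonneg_left h1 hE
    have h4 : Real.exp (ω i * (I i - cstar i) / τ) * (ω i * (cstar i - c i) / τ)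
        = s * lam i * ((cstar i - c i) / τ) := by
      rw [← hωeq i]
      have harg : a i * ω i = ω i * (I i - cstar i) / τ := by
        rw [ha]; ring
      rw [harg]
      ring
    rw [mul_add, mul_one, h4] at h3
    linarith
  have hkey : G cstar ≤ G c := by
    have hsumine := Finset.sum_le_sum (fun i (_ : i ∈ Finset.univ) => hterm i)
    have hlc := hlammax c hc
    have hnn : 0 ≤ ∑ i, s * lam i * ((cstar i - c i) / τ) := by
      have heq : ∑ i, s * lam i * ((cstar i - c i) / τ)
          = (s / τ) * (lam ⬝ᵥ cstar - lam ⬝ᵥ c) := by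
        rw [dotProduct, dotProduct, ← Finset.sum_sub_distrib, Finset.mul_sum]
        apply Finset.sum_congr rfl
        intro i _
        field_simp
      rw [heq]
      apply mul_nonneg (div_nonneg hspos.le hτ.le)
      linarith
    calc G cstar ≤ G cstar + ∑ i, s * lam i * ((cstar i - c i) / τ) :=
          le_add_of_nonneg_right hnn
      _ = ∑ i, (Real.exp (ω i * (I i - cstar i) / τ) + s * lam i * ((cstar i - c i) / τ)) := by
          rw [Finset.sum_add_distrib]
      _ ≤ G c := hsumine
  have hlog : Real.log (G cstar) ≤ Real.log (G c) := Real.log_le_log hGpos hkey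
  show -τ * Real.log (G c) ≤ -τ * Real.log (G cstar)
  nlinarith [mul_le_mul_of_nonneg_left hlog hτ.le]
end

section
/- Let $\mathcal{C} \subset \mathbb{R}^m$ be a nonempty compact convex set, $\tau > 0$, $\delta \in (0,1)$, and $I \in \mathbb{R}^m$ with $I_i > \max_{c \in \mathcal{C}} c_i$ for all $i$. Set $\Omega^m_\delta := \{\omega \in \mathbb{R}^m : \sum_i \omega_i = 1,\ \omega_i \geq \delta\}$. Suppose for each $\omega \in \Omega^m_\delta$ the function $\Phi(c,\omega) = \sum_{i=1}^m \exp(\omega_i(I_i - c_i)/\tau)$ has a unique minimizer $c^\omega$ over $\mathcal{C}$. Then $\omega \mapsto c^\omega$ is Lipschitz continuous on $\Omega^m_\delta$; explicitly, $\|c^{\omega} - c^{\omega'}\| \leq (U/\mu)\|\omega - \omega'\|$ where $\mu = (\delta/\tau)^2 e^{\delta \alpha_*/\tau}$ with $\alpha_* = \min_i (I_i - \max_{c \in \mathcal{C}} c_i)$, and $U = \max_i \frac{1}{\tau}(1 + \beta_i/\tau)e^{\beta_i/\tau}$ with $\beta_i = I_i - \min_{c \in \mathcal{C}} c_i$. 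-/
/-!
For weights `ω ≥ δ`, `Φ(·, ω)` is `μ`-strongly convex on `C`: it is a sum of one-variable
exponentials whose second derivatives `(ω_i/τ)² e^{ω_i(I_i - c_i)/τ}` are at least `μ`.
Adding the quadratic-growth inequalities at the two minimizers `c^ω`, `c^ω'` gives
`μ ‖c^ω - c^ω'‖² ≤ D(c^ω') - D(c^ω)` with `D = Φ(·, ω) - Φ(·, ω')`. A two-variable mean value
argument bounds the `i`-th term of this mixed difference by `U |ω_i - ω'_i| |c^ω_i - c^ω'_i|`,
and Cauchy–Schwarz finishes.
-/

/-- The preference simplex with all coordinates at least δ. -/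
def OmegaDelta (m : ℕ) (δ : ℝ) : Set (EuclideanSpace ℝ (Fin m)) :=
  {ω | (∑ i, ω i) = 1 ∧ ∀ i, δ ≤ ω i}

/-- α_* = min_i (I_i - max_{c ∈ C} c_i). -/
noncomputable def alphaStar (m : ℕ) (I : Fin m → ℝ)
    (C : Set (EuclideanSpace ℝ (Fin m))) : ℝ :=
  ⨅ i, (I i - sSup ((fun c : EuclideanSpace ℝ (Fin m) => c i) '' C))

/-- β_i = I_i - min_{c ∈ C} c_i. -/
noncomputable def betaB (m : ℕ) (I : Fin m → ℝ)
    (C : Set (EuclideanSpace ℝ (Fin m))) (i : Fin m) : ℝ :=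
  I i - sInf ((fun c : EuclideanSpace ℝ (Fin m) => c i) '' C)

/-- Strong-convexity constant μ = (δ/τ)² e^{δ α_*/τ}. -/
noncomputable def muConst (m : ℕ) (I : Fin m → ℝ)
    (C : Set (EuclideanSpace ℝ (Fin m))) (δ τ : ℝ) : ℝ :=
  (δ / τ) ^ 2 * Real.exp (δ * alphaStar m I C / τ)

/-- Gradient ω-Lipschitz constant U = max_i (1/τ)(1 + β_i/τ) e^{β_i/τ}. -/
noncomputable def UConst (m : ℕ) (I : Fin m → ℝ)
    (C : Set (EuclideanSpace ℝ (Fin m))) (τ : ℝ) : ℝ :=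
  ⨆ i, (1 / τ) * (1 + betaB m I C i / τ) * Real.exp (betaB m I C i / τ)

open Set

section StrongConvexity

variable {E : Type*} [NormedAddCommGroup E] [InnerProductSpace ℝ E]

theorem StrongConvexOn.subset {s t : Set E} {m : ℝ} {f : E → ℝ} (hf : StrongConvexOn t m f)
    (hst : s ⊆ t) (hs : Convex ℝ s) : StrongConvexOn s m f :=
  ⟨hs, fun _ hx _ hy _ _ ha hb hab => hf.2 (hst hx) (hst hy) ha hb hab⟩

theorem strongConvexOn_of_hasDerivAt2_ge {S : Set ℝ} (hS : Convex ℝ S) {f f' f'' : ℝ → ℝ}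
    {m : ℝ} (hf : ∀ x, HasDerivAt f (f' x) x) (hf' : ∀ x, HasDerivAt f' (f'' x) x)
    (hm : ∀ x ∈ interior S, m ≤ f'' x) : StrongConvexOn S m f := by
  have hsq (x : ℝ) : ‖x‖ ^ 2 = x ^ 2 := by rw [Real.norm_eq_abs, sq_abs]
  simp_rw [strongConvexOn_iff_convex, hsq]
  refine convexOn_of_hasDerivWithinAt2_nonneg hS (f' := fun x => f' x - m * x)
    (f'' := fun x => f'' x - m) ?_ (fun x _ => ?_) (fun x _ => ?_) (fun x hx => ?_)
  · exact (continuous_iff_continuousAt.2 fun x => (hf x).continuousAt).continuousOn.sub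
      (by fun_prop)
  · exact ((hf x).sub (((hasDerivAt_pow 2 x).const_mul (m / 2)).congr_deriv (by ring)))
      |>.hasDerivWithinAt
  · exact ((hf' x).sub (by simpa using (hasDerivAt_id x).const_mul m)).hasDerivWithinAt
  · simpa using hm x hx

theorem StrongConvexOn.add_sq_le_of_isMinOn {s : Set E} {m : ℝ} {f : E → ℝ} {x y : E}
    (hf : StrongConvexOn s m f) (hx : x ∈ s) (hmin : IsMinOn f s x) (hy : y ∈ s) :
    f x + m / 2 * ‖y - x‖ ^ 2 ≤ f y := by
  have hgap : ∀ t ∈ Ioo (0 : ℝ) 1, m / 2 * (1 - t) * ‖y - x‖ ^ 2 ≤ f y - f x := by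
    rintro t ⟨ht0, ht1⟩
    have hconv := hf.2 hx hy (sub_nonneg.2 ht1.le) ht0.le (sub_add_cancel 1 t)
    have hmin' :=
      isMinOn_iff.1 hmin _ (hf.1 hx hy (sub_nonneg.2 ht1.le) ht0.le (sub_add_cancel 1 t))
    rw [smul_eq_mul, smul_eq_mul, norm_sub_rev] at hconv
    have : t * (m / 2 * (1 - t) * ‖y - x‖ ^ 2) ≤ t * (f y - f x) := by nlinarith
    exact le_of_mul_le_mul_left this ht0
  have hlim : Filter.Tendsto (fun t : ℝ => m / 2 * (1 - t) * ‖y - x‖ ^ 2)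
      (nhdsWithin 0 (Ioo 0 1)) (nhds (m / 2 * ‖y - x‖ ^ 2)) := by
    have hcont : Continuous fun t : ℝ => m / 2 * (1 - t) * ‖y - x‖ ^ 2 := by fun_prop
    simpa using (hcont.tendsto 0).mono_left nhdsWithin_le_nhds
  have : (nhdsWithin (0 : ℝ) (Ioo 0 1)).NeBot := left_nhdsWithin_Ioo_neBot zero_lt_one
  linarith [le_of_tendsto hlim (eventually_nhdsWithin_of_forall hgap)]

theorem norm_sub_le_of_isMinOn_of_strongConvexOn {s : Set E} {μ L : ℝ} {f g : E → ℝ} {x y : E}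
    (hμ : 0 < μ) (hL : 0 ≤ L) (hf : StrongConvexOn s μ f) (hg : StrongConvexOn s μ g)
    (hx : x ∈ s) (hy : y ∈ s) (hfx : IsMinOn f s x) (hgy : IsMinOn g s y)
    (hfg : (f y - g y) - (f x - g x) ≤ L * ‖x - y‖) : ‖x - y‖ ≤ L / μ := by
  have growth_f := hf.add_sq_le_of_isMinOn hx hfx hy
  have growth_g := hg.add_sq_le_of_isMinOn hy hgy hx
  rw [norm_sub_rev] at growth_f
  have key : μ * ‖x - y‖ * ‖x - y‖ ≤ L * ‖x - y‖ := by nlinarith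
  rw [le_div_iff₀ hμ, mul_comm]
  rcases (norm_nonneg (x - y)).eq_or_lt with h0 | h0
  · rw [← h0, mul_zero]; exact hL
  · exact le_of_mul_le_mul_right key h0

end StrongConvexity

theorem strongConvexOn_exp_mul_sub {b : ℝ} (hb : 0 ≤ b) (A S : ℝ) :
    StrongConvexOn (Iic S) (b ^ 2 * Real.exp (b * (A - S))) fun x => Real.exp (b * (A - x)) := by
  have hlin (x : ℝ) : HasDerivAt (fun x => b * (A - x)) (-b) x := by
    simpa using ((hasDerivAt_id x).const_sub A).const_mul b
  refine strongConvexOn_of_hasDerivAt2_ge (convex_Iic S)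
    (f' := fun x => -b * Real.exp (b * (A - x))) (f'' := fun x => b ^ 2 * Real.exp (b * (A - x)))
    (fun x => ((hlin x).exp).congr_deriv (by ring))
    (fun x => (((hlin x).exp).const_mul (-b)).congr_deriv (by ring)) fun x hx => ?_
  rw [interior_Iic] at hx
  gcongr
  exact hx.le

section EuclideanSpace

variable {ι : Type*} [Fintype ι]

theorem strongConvexOn_sum_apply {t : ι → Set ℝ} {g : ι → ℝ → ℝ} {m : ℝ}
    (hg : ∀ i, StrongConvexOn (t i) m (g i)) :
    StrongConvexOn {c : EuclideanSpace ℝ ι | ∀ i, c i ∈ t i} m fun c => ∑ i, g i (c i) := by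
  refine ⟨fun x hx y hy a b ha hb hab i => (hg i).1 (hx i) (hy i) ha hb hab,
    fun x hx y hy a b ha hb hab => ?_⟩
  have hnorm : ‖x - y‖ ^ 2 = ∑ i, ‖x i - y i‖ ^ 2 := by
    simp [EuclideanSpace.norm_sq_eq]
  simp only [PiLp.add_apply, PiLp.smul_apply, smul_eq_mul, hnorm, Finset.mul_sum,
    ← Finset.sum_add_distrib, ← Finset.sum_sub_distrib]
  exact Finset.sum_le_sum fun i _ => (hg i).2 (hx i) (hy i) ha hb hab

theorem EuclideanSpace.sum_abs_mul_abs_le (a b : EuclideanSpace ℝ ι) :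
    ∑ i, |a i| * |b i| ≤ ‖a‖ * ‖b‖ := by
  simpa [EuclideanSpace.norm_eq] using Real.sum_mul_le_sqrt_mul_sqrt Finset.univ
    (fun i => |a i|) (fun i => |b i|)

end EuclideanSpace

section MixedDifference

variable {τ β : ℝ}

theorem abs_one_add_mul_exp_le (hτ : 0 < τ) {t : ℝ} (ht : t ∈ Icc 0 β) :
    |1 / τ * (1 + t / τ) * Real.exp (t / τ)| ≤ 1 / τ * (1 + β / τ) * Real.exp (β / τ) := by
  obtain ⟨ht0, htβ⟩ := ht
  have hβ : 0 ≤ β := ht0.trans htβ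
  rw [abs_of_nonneg (by positivity)]
  gcongr

theorem abs_mul_exp_sub_mul_exp_le (hτ : 0 < τ) {a w w' : ℝ} (ha : a ∈ Icc 0 β)
    (hw : w ∈ Icc (0 : ℝ) 1) (hw' : w' ∈ Icc (0 : ℝ) 1) :
    |w / τ * Real.exp (w * a / τ) - w' / τ * Real.exp (w' * a / τ)| ≤
      1 / τ * (1 + β / τ) * Real.exp (β / τ) * |w - w'| := by
  have hderiv : ∀ u ∈ Icc (0 : ℝ) 1, HasDerivWithinAt (fun u => u / τ * Real.exp (u * a / τ))
      (1 / τ * (1 + u * a / τ) * Real.exp (u * a / τ)) (Icc 0 1) u := by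
    intro u _
    have hlin : HasDerivAt (fun u => u * a / τ) (a / τ) u := by
      simpa using ((hasDerivAt_id u).mul_const a).div_const τ
    exact ((((hasDerivAt_id' u).div_const τ).mul hlin.exp).congr_deriv (by ring))
      |>.hasDerivWithinAt
  have hbound : ∀ u ∈ Icc (0 : ℝ) 1, ‖1 / τ * (1 + u * a / τ) * Real.exp (u * a / τ)‖ ≤
      1 / τ * (1 + β / τ) * Real.exp (β / τ) := fun u hu =>
    abs_one_add_mul_exp_le hτ ⟨mul_nonneg hu.1 ha.1, by nlinarith [hu.1, hu.2, ha.1, ha.2]⟩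
  simpa [Real.norm_eq_abs] using
    (convex_Icc 0 1).norm_image_sub_le_of_norm_hasDerivWithin_le hderiv hbound hw' hw

/-- The constant is a bound for the mixed second derivative of `(w, a) ↦ exp (w a / τ)` on
`[0, 1] × [0, β]`. -/
theorem abs_exp_mixed_sub_le (hτ : 0 < τ) {a b w w' : ℝ} (ha : a ∈ Icc 0 β) (hb : b ∈ Icc 0 β)
    (hw : w ∈ Icc (0 : ℝ) 1) (hw' : w' ∈ Icc (0 : ℝ) 1) :
    |(Real.exp (w * a / τ) - Real.exp (w' * a / τ)) -
        (Real.exp (w * b / τ) - Real.exp (w' * b / τ))| ≤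
      1 / τ * (1 + β / τ) * Real.exp (β / τ) * |w - w'| * |a - b| := by
  have hderiv : ∀ s ∈ Icc 0 β,
      HasDerivWithinAt (fun s => Real.exp (w * s / τ) - Real.exp (w' * s / τ))
        (w / τ * Real.exp (w * s / τ) - w' / τ * Real.exp (w' * s / τ)) (Icc 0 β) s := by
    intro s _
    have hlin (v : ℝ) : HasDerivAt (fun s => v * s / τ) (v / τ) s := by
      simpa using ((hasDerivAt_id s).const_mul v).div_const τ
    exact (((hlin w).exp.sub (hlin w').exp).congr_deriv (by ring)).hasDerivWithinAt
  simpa [Real.norm_eq_abs] using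
    (convex_Icc 0 β).norm_image_sub_le_of_norm_hasDerivWithin_le hderiv
      (fun s hs => abs_mul_exp_sub_mul_exp_le hτ hs hw hw') hb ha

end MixedDifference

section SmoothTchebycheff

variable {ι : Type*} [Fintype ι] {τ : ℝ} {I : ι → ℝ}

/-- The objective `Φ(c, ω)`, with the weight `ω` as first argument. -/
noncomputable def smoothTchebycheff (τ : ℝ) (I : ι → ℝ) (ω c : EuclideanSpace ℝ ι) : ℝ :=
  ∑ i, Real.exp (ω i * (I i - c i) / τ)

theorem strongConvexOn_smoothTchebycheff {C : Set (EuclideanSpace ℝ ι)} (hC : Convex ℝ C)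
    (hτ : 0 < τ) {δ α : ℝ} (hδ : 0 ≤ δ) (hα : 0 ≤ α) {ω : EuclideanSpace ℝ ι}
    (hω : ∀ i, δ ≤ ω i) (hCα : ∀ c ∈ C, ∀ i, c i ≤ I i - α) :
    StrongConvexOn C ((δ / τ) ^ 2 * Real.exp (δ * α / τ)) (smoothTchebycheff τ I ω) := by
  have hcoord : ∀ i, StrongConvexOn (Iic (I i - α)) ((δ / τ) ^ 2 * Real.exp (δ * α / τ))
      fun x => Real.exp (ω i * (I i - x) / τ) := by
    intro i
    have hωi : 0 ≤ ω i / τ := div_nonneg (hδ.trans (hω i)) hτ.le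
    simp_rw [mul_div_right_comm (ω i)]
    refine (strongConvexOn_exp_mul_sub hωi (I i) (I i - α)).mono ?_
    rw [sub_sub_cancel, mul_div_right_comm]
    gcongr <;> exact hω i
  exact (strongConvexOn_sum_apply hcoord).subset hCα hC

theorem smoothTchebycheff_sub_sub_le (hτ : 0 < τ) {β : ι → ℝ} {U : ℝ}
    (hU : ∀ i, 1 / τ * (1 + β i / τ) * Real.exp (β i / τ) ≤ U) (hU0 : 0 ≤ U)
    {ω ω' x y : EuclideanSpace ℝ ι} (hω : ∀ i, ω i ∈ Icc (0 : ℝ) 1)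
    (hω' : ∀ i, ω' i ∈ Icc (0 : ℝ) 1) (hx : ∀ i, I i - x i ∈ Icc 0 (β i))
    (hy : ∀ i, I i - y i ∈ Icc 0 (β i)) :
    (smoothTchebycheff τ I ω y - smoothTchebycheff τ I ω' y) -
        (smoothTchebycheff τ I ω x - smoothTchebycheff τ I ω' x) ≤ U * ‖ω - ω'‖ * ‖x - y‖ := by
  have hterm : ∀ i, (Real.exp (ω i * (I i - y i) / τ) - Real.exp (ω' i * (I i - y i) / τ)) -
      (Real.exp (ω i * (I i - x i) / τ) - Real.exp (ω' i * (I i - x i) / τ)) ≤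
      U * (|(ω - ω') i| * |(x - y) i|) := by
    intro i
    have h := abs_exp_mixed_sub_le hτ (hy i) (hx i) (hω i) (hω' i)
    rw [sub_sub_sub_cancel_left] at h
    rw [PiLp.sub_apply, PiLp.sub_apply, ← mul_assoc]
    exact (le_abs_self _).trans (h.trans (by gcongr; exact hU i))
  simp only [smoothTchebycheff, ← Finset.sum_sub_distrib]
  calc _ ≤ ∑ i, U * (|(ω - ω') i| * |(x - y) i|) := Finset.sum_le_sum fun i _ => hterm i
    _ = U * ∑ i, |(ω - ω') i| * |(x - y) i| := Finset.mul_sum _ _ _ |>.symm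
    _ ≤ U * (‖ω - ω'‖ * ‖x - y‖) := by gcongr; exact EuclideanSpace.sum_abs_mul_abs_le _ _
    _ = U * ‖ω - ω'‖ * ‖x - y‖ := (mul_assoc _ _ _).symm

end SmoothTchebycheff

section Constants

variable {m : ℕ} {I : Fin m → ℝ} {C : Set (EuclideanSpace ℝ (Fin m))}

theorem OmegaDelta.apply_mem_Icc {δ : ℝ} (hδ : 0 ≤ δ) {ω : EuclideanSpace ℝ (Fin m)}
    (hω : ω ∈ OmegaDelta m δ) (i : Fin m) : ω i ∈ Icc (0 : ℝ) 1 := by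
  have hnonneg : ∀ j, 0 ≤ ω j := fun j => hδ.trans (hω.2 j)
  exact ⟨hnonneg i, hω.1 ▸ Finset.single_le_sum (fun j _ => hnonneg j) (Finset.mem_univ i)⟩

theorem alphaStar_nonneg (hne : C.Nonempty) (hI : ∀ i, ∀ c ∈ C, c i < I i) :
    0 ≤ alphaStar m I C :=
  Real.iInf_nonneg fun i => sub_nonneg.2 <|
    csSup_le (hne.image _) (by rintro _ ⟨c, hc, rfl⟩; exact (hI i c hc).le)

theorem apply_le_sub_alphaStar (hcomp : IsCompact C) {c : EuclideanSpace ℝ (Fin m)}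
    (hc : c ∈ C) (i : Fin m) : c i ≤ I i - alphaStar m I C := by
  have hmax : c i ≤ sSup ((fun c : EuclideanSpace ℝ (Fin m) => c i) '' C) :=
    le_csSup (hcomp.image (by fun_prop)).bddAbove ⟨c, hc, rfl⟩
  have hα : alphaStar m I C ≤ I i - sSup ((fun c : EuclideanSpace ℝ (Fin m) => c i) '' C) :=
    ciInf_le (Finite.bddBelow_range _) i
  linarith

theorem sub_apply_mem_Icc_betaB (hcomp : IsCompact C) (hI : ∀ i, ∀ c ∈ C, c i < I i)
    {c : EuclideanSpace ℝ (Fin m)} (hc : c ∈ C) (i : Fin m) :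
    I i - c i ∈ Icc 0 (betaB m I C i) := by
  have hmin : sInf ((fun c : EuclideanSpace ℝ (Fin m) => c i) '' C) ≤ c i :=
    csInf_le (hcomp.image (by fun_prop)).bddBelow ⟨c, hc, rfl⟩
  exact ⟨sub_nonneg.2 (hI i c hc).le, sub_le_sub_left hmin _⟩

theorem muConst_pos {δ τ : ℝ} (hτ : 0 < τ) (hδ : 0 < δ) : 0 < muConst m I C δ τ := by
  unfold muConst
  positivity

theorem le_UConst (τ : ℝ) (i : Fin m) :
    1 / τ * (1 + betaB m I C i / τ) * Real.exp (betaB m I C i / τ) ≤ UConst m I C τ :=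
  le_ciSup (f := fun i => 1 / τ * (1 + betaB m I C i / τ) * Real.exp (betaB m I C i / τ))
    (Finite.bddAbove_range _) i

theorem UConst_nonneg (hne : C.Nonempty) (hcomp : IsCompact C) (hI : ∀ i, ∀ c ∈ C, c i < I i)
    {τ : ℝ} (hτ : 0 < τ) : 0 ≤ UConst m I C τ := by
  obtain ⟨c, hc⟩ := hne
  refine Real.iSup_nonneg fun i => ?_
  obtain ⟨h0, hle⟩ := sub_apply_mem_Icc_betaB hcomp hI hc i
  have hβ : 0 ≤ betaB m I C i := h0.trans hle
  positivity

end Constants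

theorem stmt_8_general (m : ℕ) (C : Set (EuclideanSpace ℝ (Fin m))) (hne : C.Nonempty)
    (hcomp : IsCompact C) (hconv : Convex ℝ C)
    (τ δ : ℝ) (hτ : 0 < τ) (hδ0 : 0 < δ)
    (I : Fin m → ℝ) (hI : ∀ i, ∀ c ∈ C, c i < I i)
    (copt : EuclideanSpace ℝ (Fin m) → EuclideanSpace ℝ (Fin m))
    (hopt : ∀ ω ∈ OmegaDelta m δ,
      copt ω ∈ C ∧ (∀ c ∈ C,
        (∑ i, Real.exp (ω i * (I i - copt ω i) / τ)) ≤ ∑ i, Real.exp (ω i * (I i - c i) / τ)) ∧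
      (∀ c ∈ C, (∀ c' ∈ C,
        (∑ i, Real.exp (ω i * (I i - c i) / τ)) ≤ ∑ i, Real.exp (ω i * (I i - c' i) / τ)) →
        c = copt ω)) :
    ∀ ω ∈ OmegaDelta m δ, ∀ ω' ∈ OmegaDelta m δ,
      ‖copt ω - copt ω'‖ ≤ (UConst m I C τ / muConst m I C δ τ) * ‖ω - ω'‖ := by
  intro ω hω ω' hω'
  obtain ⟨hxC, hxmin, -⟩ := hopt ω hω
  obtain ⟨hyC, hymin, -⟩ := hopt ω' hω'
  have hsc : ∀ w ∈ OmegaDelta m δ,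
      StrongConvexOn C (muConst m I C δ τ) (smoothTchebycheff τ I w) := fun w hw =>
    strongConvexOn_smoothTchebycheff hconv hτ hδ0.le (alphaStar_nonneg hne hI) hw.2
      fun c hc => apply_le_sub_alphaStar hcomp hc
  have hU0 := UConst_nonneg hne hcomp hI hτ
  have hmixed := smoothTchebycheff_sub_sub_le hτ (le_UConst τ) hU0
    (OmegaDelta.apply_mem_Icc hδ0.le hω) (OmegaDelta.apply_mem_Icc hδ0.le hω')
    (sub_apply_mem_Icc_betaB hcomp hI hxC) (sub_apply_mem_Icc_betaB hcomp hI hyC)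
  rw [div_mul_eq_mul_div]
  exact norm_sub_le_of_isMinOn_of_strongConvexOn (muConst_pos hτ hδ0) (by positivity)
    (hsc ω hω) (hsc ω' hω') hxC hyC (isMinOn_iff.2 hxmin) (isMinOn_iff.2 hymin) hmixed

/-- Lipschitz continuity of the STCH minimizer map ω ↦ c^ω on Ω^m_δ
with explicit constant U/μ. -/
theorem stmt_8 (m : ℕ) (C : Set (EuclideanSpace ℝ (Fin m))) (hne : C.Nonempty)
    (hcomp : IsCompact C) (hconv : Convex ℝ C)
    (τ δ : ℝ) (hτ : 0 < τ) (hδ0 : 0 < δ) (hδ1 : δ < 1)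
    (I : Fin m → ℝ) (hI : ∀ i, ∀ c ∈ C, c i < I i)
    (copt : EuclideanSpace ℝ (Fin m) → EuclideanSpace ℝ (Fin m))
    (hopt : ∀ ω ∈ OmegaDelta m δ,
      copt ω ∈ C ∧ (∀ c ∈ C,
        (∑ i, Real.exp (ω i * (I i - copt ω i) / τ)) ≤ ∑ i, Real.exp (ω i * (I i - c i) / τ)) ∧
      (∀ c ∈ C, (∀ c' ∈ C,
        (∑ i, Real.exp (ω i * (I i - c i) / τ)) ≤ ∑ i, Real.exp (ω i * (I i - c' i) / τ)) →
        c = copt ω)) :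
    ∀ ω ∈ OmegaDelta m δ, ∀ ω' ∈ OmegaDelta m δ,
      ‖copt ω - copt ω'‖ ≤ (UConst m I C τ / muConst m I C δ τ) * ‖ω - ω'‖ :=
  stmt_8_general m C hne hcomp hconv τ δ hτ hδ0 I hI copt hopt
end
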